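/- arXiv:1507.05567 — 3 statements merged into one kernel-verified Lean document; each statement's English description precedes it below -/
import Mathlib

section
/- Let T > 0, let f : ℝ → ℝ be a continuously differentiable T-periodic function, and let α ∈ (0,1). Define the Caputo fractional derivative of f by ᶜD^α f(t) = (1/Γ(1−α)) ∫₀ᵗ (t−s)^{−α} f′(s) ds for t > 0. Then lim_{t→+∞} [ᶜD^α f(t+T) − ᶜD^α f(t)] = 0. -/
open MeasureTheory intervalIntegral Filter

/-! Substituting `s = u + T` and using the periodicity of `f'`, the integral defining
`ᶜD^α f (t + T)` is the one defining `ᶜD^α f t` plus the extra piece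
`∫_{-T}^0 (t - u)^(-α) f'(u) du`. On `[-T, 0]` the kernel is at most `t^(-α)` and `f'` is
bounded, so this piece is `O(t^(-α))`, which tends to `0` since `α > 0`. -/

theorem Function.Periodic.deriv {f : ℝ → ℝ} {T : ℝ} (h : Function.Periodic f T) :
    Function.Periodic (deriv f) T := fun x => by
  rw [← deriv_comp_add_const, show (fun y => f (y + T)) = f from funext h]

section
variable {g : ℝ → ℝ} {T r t : ℝ}

theorem intervalIntegrable_sub_rpow_mul (hg : Continuous g) (hr : -1 < r) (t : ℝ) :
    IntervalIntegrable (fun s => (t - s) ^ r * g s) volume 0 t := by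
  refine IntervalIntegrable.mul_continuousOn ?_ hg.continuousOn
  simpa using (intervalIntegrable_rpow' hr (a := t) (b := 0)).comp_sub_left t

theorem integral_sub_rpow_mul_add_period_sub (hg : Continuous g) (hper : Function.Periodic g T)
    (hT : 0 ≤ T) (hr : -1 < r) (ht : 0 < t) :
    (∫ s in 0..t + T, (t + T - s) ^ r * g s) - ∫ s in 0..t, (t - s) ^ r * g s =
      ∫ u in -T..0, (t - u) ^ r * g u := by
  have hint : IntervalIntegrable (fun s => (t - s) ^ r * g s) volume (-T) 0 := by
    refine ContinuousOn.intervalIntegrable (ContinuousOn.mul ?_ hg.continuousOn)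
    refine ContinuousOn.rpow_const (by fun_prop) fun u hu => Or.inl ?_
    rw [Set.uIcc_of_le (by linarith)] at hu
    linarith [hu.2]
  have hshift : (∫ s in 0..t + T, (t + T - s) ^ r * g s) = ∫ u in -T..t, (t - u) ^ r * g u := by
    have h := integral_comp_add_right (a := -T) (b := t) (fun s => (t + T - s) ^ r * g s) T
    rw [neg_add_cancel] at h
    rw [← h]
    refine integral_congr fun u _ => ?_
    simp only [hper u, add_sub_add_right_eq_sub]
  rw [hshift, ← integral_add_adjacent_intervals hint (intervalIntegrable_sub_rpow_mul hg hr t),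
    add_sub_cancel_right]

theorem norm_integral_sub_rpow_mul_le {M : ℝ} (hr : r ≤ 0) (hT : 0 ≤ T) (ht : 0 < t)
    (hM : ∀ u ∈ Set.Icc (-T) 0, ‖g u‖ ≤ M) :
    ‖∫ u in -T..0, (t - u) ^ r * g u‖ ≤ M * T * t ^ r := by
  have hbound : ∀ u ∈ Set.uIoc (-T) 0, ‖(t - u) ^ r * g u‖ ≤ t ^ r * M := by
    intro u hu
    rw [Set.uIoc_of_le (by linarith)] at hu
    rw [norm_mul, Real.norm_of_nonneg (Real.rpow_nonneg (by linarith [hu.2]) r)]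
    exact mul_le_mul (Real.rpow_le_rpow_of_nonpos ht (by linarith [hu.2]) hr)
      (hM u (Set.Ioc_subset_Icc_self hu)) (norm_nonneg _) (Real.rpow_nonneg ht.le r)
  calc ‖∫ u in -T..0, (t - u) ^ r * g u‖ ≤ t ^ r * M * |0 - -T| :=
        norm_integral_le_of_norm_le_const hbound
    _ = M * T * t ^ r := by rw [zero_sub, neg_neg, abs_of_nonneg hT]; ring

theorem tendsto_integral_sub_rpow_mul_atTop (hg : Continuous g) (hT : 0 ≤ T) (hr : r < 0) :
    Tendsto (fun t => ∫ u in -T..0, (t - u) ^ r * g u) atTop (nhds 0) := by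
  obtain ⟨M, hM⟩ :=
    (isCompact_Icc (a := -T) (b := 0)).exists_bound_of_continuousOn hg.continuousOn
  have hlim : Tendsto (fun t : ℝ => M * T * t ^ r) atTop (nhds 0) := by
    simpa using (tendsto_rpow_neg_atTop (neg_pos.2 hr)).const_mul (M * T)
  refine squeeze_zero_norm' ?_ hlim
  filter_upwards [eventually_gt_atTop 0] with t ht
  exact norm_integral_sub_rpow_mul_le hr.le hT ht hM

end

/-- For a continuously differentiable `T`-periodic `f` and `α ∈ (0,1)`, the Caputo
fractional derivative `ᶜD^α f` satisfies `ᶜD^α f (t+T) - ᶜD^α f (t) → 0` as `t → +∞`. -/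
theorem caputo_derivative_asymptotically_periodic_property (T : ℝ) (hT : 0 < T)
    (f : ℝ → ℝ) (hf : ContDiff ℝ 1 f) (hper : Function.Periodic f T)
    (α : ℝ) (hα : α ∈ Set.Ioo (0 : ℝ) 1)
    (cD : ℝ → ℝ)
    (hcD : ∀ t : ℝ, cD t =
      (1 / Real.Gamma (1 - α)) * ∫ s in (0 : ℝ)..t, (t - s) ^ (-α) * deriv f s) :
    Tendsto (fun t : ℝ => cD (t + T) - cD t) atTop (nhds 0) := by
  have hf' : Continuous (deriv f) := hf.continuous_deriv le_rfl
  have hdiff : ∀ᶠ t in atTop, (1 / Real.Gamma (1 - α)) *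
      (∫ u in -T..0, (t - u) ^ (-α) * deriv f u) = cD (t + T) - cD t := by
    filter_upwards [eventually_gt_atTop 0] with t ht
    rw [hcD, hcD, ← mul_sub, integral_sub_rpow_mul_add_period_sub hf' hper.deriv hT.le
      (by linarith [hα.2]) ht]
  simpa using ((tendsto_integral_sub_rpow_mul_atTop hf' hT.le (neg_neg_of_pos hα.1)).const_mul
    (1 / Real.Gamma (1 - α))).congr' hdiff
end

section
/- Let T > 0, let f : ℝ → ℝ be a continuous T-periodic function, and let α ∈ (0,1). Then the function t ↦ I^α f(t) is bounded on (0,∞) if and only if ∫₀ᵀ f(t) dt = 0. -/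
/-!
Split `∫₀ᵗ (t-s)^(α-1) f(s) ds` at `s = t - T`. On the last period the kernel is integrable,
which bounds that piece by `‖f‖∞ T^α / α`. On `[0, t - T]` the kernel is smooth and increasing,
so if `∫₀ᵀ f = 0`, integrating by parts against the bounded periodic primitive `F` of `f`
bounds it by `2 ‖F‖∞ T^(α-1)`. Conversely, subtracting the mean `c` of `f` changes the integral
by `c t^α / α`, which is unbounded unless `c = 0`.
-/

open MeasureTheory intervalIntegral Set Filter

lemma exists_abs_const_mul_le_iff {ι : Type*} {s : Set ι} {c : ℝ} (hc : c ≠ 0) {g : ι → ℝ} :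
    (∃ M, ∀ x ∈ s, |c * g x| ≤ M) ↔ ∃ M, ∀ x ∈ s, |g x| ≤ M := by
  constructor
  · rintro ⟨M, hM⟩
    refine ⟨M / |c|, fun x hx => ?_⟩
    rw [le_div_iff₀ (abs_pos.2 hc), mul_comm, ← abs_mul]
    exact hM x hx
  · rintro ⟨M, hM⟩
    refine ⟨|c| * M, fun x hx => ?_⟩
    rw [abs_mul]
    exact mul_le_mul_of_nonneg_left (hM x hx) (abs_nonneg c)

lemma eq_zero_of_forall_abs_mul_rpow_le {α c M : ℝ} (hα : 0 < α)
    (h : ∀ t > 0, |c * t ^ α| ≤ M) : c = 0 := by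
  by_contra hc
  have hlim : Tendsto (fun t : ℝ => |c| * t ^ α) atTop atTop :=
    (tendsto_rpow_atTop hα).const_mul_atTop (abs_pos.2 hc)
  obtain ⟨t, htM, ht⟩ := ((hlim.eventually_gt_atTop M).and (eventually_gt_atTop 0)).exists
  have := h t ht
  rw [abs_mul, abs_of_pos (Real.rpow_pos_of_pos ht α)] at this
  linarith

lemma Function.Periodic.exists_abs_le {f : ℝ → ℝ} {T : ℝ} (hper : Function.Periodic f T)
    (hT : T ≠ 0) (hf : Continuous f) : ∃ C, ∀ x, |f x| ≤ C := by
  obtain ⟨C, hC⟩ := (hper.isBounded_of_continuous hT hf).exists_norm_le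
  exact ⟨C, fun x => hC (f x) (mem_range_self x)⟩

lemma Function.Periodic.periodic_primitive_of_integral_eq_zero {f : ℝ → ℝ} {T : ℝ}
    (hper : Function.Periodic f T) (hf : ∀ a b, IntervalIntegrable f volume a b)
    (hmean : ∫ x in (0 : ℝ)..T, f x = 0) :
    Function.Periodic (fun t => ∫ x in (0 : ℝ)..t, f x) T := fun t => by
  simp only [hper.intervalIntegral_add_eq_add 0 t hf, zero_add, hmean, add_zero]

lemma abs_integral_mul_le_of_monotone_of_primitive {u u' f F : ℝ → ℝ} {a b C : ℝ} (hab : a ≤ b)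
    (hu : ∀ x ∈ uIcc a b, HasDerivAt u (u' x) x) (hu' : IntervalIntegrable u' volume a b)
    (hu'_nonneg : ∀ x ∈ Icc a b, 0 ≤ u' x)
    (hF : ∀ x ∈ uIcc a b, HasDerivAt F (f x) x) (hf : IntervalIntegrable f volume a b)
    (hFC : ∀ x ∈ Icc a b, |F x| ≤ C) :
    |∫ x in a..b, u x * f x| ≤ C * (|u a| + |u b| + (u b - u a)) := by
  have hrest : |∫ x in a..b, u' x * F x| ≤ C * (u b - u a) := by
    calc |∫ x in a..b, u' x * F x| ≤ ∫ x in a..b, u' x * C := by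
          rw [← Real.norm_eq_abs]
          refine norm_integral_le_of_norm_le hab (ae_of_all _ fun x hx => ?_) (hu'.mul_const C)
          have hx' : x ∈ Icc a b := Ioc_subset_Icc_self hx
          rw [Real.norm_eq_abs, abs_mul, abs_of_nonneg (hu'_nonneg x hx')]
          exact mul_le_mul_of_nonneg_left (hFC x hx') (hu'_nonneg x hx')
      _ = C * (u b - u a) := by
          rw [intervalIntegral.integral_mul_const, integral_eq_sub_of_hasDerivAt hu hu', mul_comm]
  have hFa := hFC a (left_mem_Icc.2 hab)
  have hFb := hFC b (right_mem_Icc.2 hab)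
  rw [integral_mul_deriv_eq_deriv_mul hu hF hu' hf]
  calc |u b * F b - u a * F a - ∫ x in a..b, u' x * F x|
      ≤ |u b| * |F b| + |u a| * |F a| + |∫ x in a..b, u' x * F x| := by
        rw [← abs_mul, ← abs_mul]
        exact (abs_sub _ _).trans (by gcongr; exact abs_sub _ _)
    _ ≤ |u b| * C + |u a| * C + C * (u b - u a) := by gcongr
    _ = C * (|u a| + |u b| + (u b - u a)) := by ring

section Kernel

variable {α : ℝ}

lemma intervalIntegrable_sub_rpow_mul_s14 (hα : 0 < α) {f : ℝ → ℝ} {a b : ℝ}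
    (hf : ContinuousOn f (uIcc a b)) (t : ℝ) :
    IntervalIntegrable (fun s => (t - s) ^ (α - 1) * f s) volume a b := by
  have hker : IntervalIntegrable (fun s => (t - s) ^ (α - 1)) volume a b := by
    simpa using (intervalIntegrable_rpow' (a := t - a) (b := t - b) (r := α - 1)
      (by linarith)).comp_sub_left t
  exact hker.mul_continuousOn hf

lemma integral_sub_rpow (hα : 0 < α) (a t : ℝ) :
    ∫ s in a..t, (t - s) ^ (α - 1) = (t - a) ^ α / α := by
  rw [integral_comp_sub_left (fun x => x ^ (α - 1)), sub_self,
    integral_rpow (Or.inl (by linarith)), sub_add_cancel, Real.zero_rpow hα.ne', sub_zero]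

lemma abs_integral_sub_rpow_mul_le (hα : 0 < α) {f : ℝ → ℝ} {a t C : ℝ} (hat : a ≤ t)
    (hC : ∀ s ∈ Icc a t, |f s| ≤ C) :
    |∫ s in a..t, (t - s) ^ (α - 1) * f s| ≤ C * ((t - a) ^ α / α) := by
  have hker : IntervalIntegrable (fun s => (t - s) ^ (α - 1) * C) volume a t :=
    intervalIntegrable_sub_rpow_mul_s14 hα continuousOn_const t
  calc |∫ s in a..t, (t - s) ^ (α - 1) * f s| ≤ ∫ s in a..t, (t - s) ^ (α - 1) * C := by
        rw [← Real.norm_eq_abs]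
        refine norm_integral_le_of_norm_le hat (ae_of_all _ fun s hs => ?_) hker
        have hts : 0 ≤ (t - s) ^ (α - 1) := Real.rpow_nonneg (by linarith [hs.2]) _
        rw [Real.norm_eq_abs, abs_mul, abs_of_nonneg hts]
        exact mul_le_mul_of_nonneg_left (hC s (Ioc_subset_Icc_self hs)) hts
    _ = C * ((t - a) ^ α / α) := by
        rw [intervalIntegral.integral_mul_const, integral_sub_rpow hα, mul_comm]

lemma hasDerivAt_sub_rpow {t s : ℝ} (hs : s < t) :
    HasDerivAt (fun s => (t - s) ^ (α - 1)) ((1 - α) * (t - s) ^ (α - 2)) s := by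
  have h := ((hasDerivAt_id' s).const_sub t).rpow_const (p := α - 1) (Or.inl (by linarith))
  convert h using 1
  ring_nf

/-- For `α ≤ 1` the kernel is increasing on `[a, b]`, so its total variation there is at most
its value at `b`; hence the bound does not grow with the length of `[a, b]`. -/
lemma abs_integral_sub_rpow_mul_le_of_primitive (hα : α ≤ 1) {f F : ℝ → ℝ} {a b t C : ℝ}
    (hab : a ≤ b) (hbt : b < t) (hf : ContinuousOn f (Icc a b))
    (hF : ∀ x ∈ Icc a b, HasDerivAt F (f x) x) (hFC : ∀ x ∈ Icc a b, |F x| ≤ C) :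
    |∫ s in a..b, (t - s) ^ (α - 1) * f s| ≤ 2 * C * (t - b) ^ (α - 1) := by
  have hpos : ∀ x ∈ Icc a b, 0 < t - x := fun x hx => by linarith [hx.2]
  have hu' : ContinuousOn (fun x => (1 - α) * (t - x) ^ (α - 2)) (Icc a b) :=
    continuousOn_const.mul ((continuous_const.sub continuous_id).continuousOn.rpow_const
      fun x hx => Or.inl (hpos x hx).ne')
  rw [← uIcc_of_le hab] at hu' hf hF
  have h := abs_integral_mul_le_of_monotone_of_primitive hab
    (fun x hx => hasDerivAt_sub_rpow (by linarith [(uIcc_of_le hab ▸ hx).2]))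
    hu'.intervalIntegrable
    (fun x hx => mul_nonneg (by linarith) (Real.rpow_nonneg (hpos x hx).le _))
    hF hf.intervalIntegrable hFC
  rw [abs_of_nonneg (Real.rpow_nonneg (hpos a (left_mem_Icc.2 hab)).le _),
    abs_of_nonneg (Real.rpow_nonneg (by linarith) _)] at h
  exact h.trans_eq (by ring)

lemma integral_sub_rpow_mul_sub_const (hα : 0 < α) {f : ℝ → ℝ} {t : ℝ}
    (hf : ContinuousOn f (uIcc 0 t)) (c : ℝ) :
    ∫ s in (0 : ℝ)..t, (t - s) ^ (α - 1) * (f s - c) =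
      (∫ s in (0 : ℝ)..t, (t - s) ^ (α - 1) * f s) - c * (t ^ α / α) := by
  simp only [mul_sub]
  rw [integral_sub (intervalIntegrable_sub_rpow_mul_s14 hα hf t)
    (intervalIntegrable_sub_rpow_mul_s14 hα continuousOn_const t), intervalIntegral.integral_mul_const,
    integral_sub_rpow hα, sub_zero, mul_comm]

theorem exists_abs_integral_sub_rpow_mul_le_of_periodic {f : ℝ → ℝ} {T : ℝ} (hT : 0 < T)
    (hf : Continuous f) (hper : Function.Periodic f T) (hmean : ∫ x in (0 : ℝ)..T, f x = 0)
    (hα0 : 0 < α) (hα1 : α ≤ 1) :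
    ∃ M, ∀ t, 0 ≤ t → |∫ s in (0 : ℝ)..t, (t - s) ^ (α - 1) * f s| ≤ M := by
  set F : ℝ → ℝ := fun t => ∫ x in (0 : ℝ)..t, f x
  have hF : ∀ x, HasDerivAt F (f x) x := fun x => (hf.integral_hasStrictDerivAt 0 x).hasDerivAt
  have hFper : Function.Periodic F T :=
    hper.periodic_primitive_of_integral_eq_zero hf.intervalIntegrable hmean
  obtain ⟨Cf, hCf⟩ := hper.exists_abs_le hT.ne' hf
  obtain ⟨CF, hCF⟩ := hFper.exists_abs_le hT.ne' (continuous_iff_continuousAt.2 fun x =>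
    (hF x).continuousAt)
  have hCf0 : 0 ≤ Cf := (abs_nonneg _).trans (hCf 0)
  have hnear : ∀ a t, a ≤ t → t - a ≤ T →
      |∫ s in a..t, (t - s) ^ (α - 1) * f s| ≤ Cf * (T ^ α / α) := fun a t hat htT =>
    (abs_integral_sub_rpow_mul_le hα0 hat fun s _ => hCf s).trans (by gcongr)
  refine ⟨2 * CF * T ^ (α - 1) + Cf * (T ^ α / α), fun t ht => ?_⟩
  have hfar_nonneg : 0 ≤ 2 * CF * T ^ (α - 1) :=
    mul_nonneg (mul_nonneg zero_le_two ((abs_nonneg _).trans (hCF 0))) (Real.rpow_nonneg hT.le _)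
  rcases le_or_gt t T with htT | hTt
  · exact (hnear 0 t ht (by linarith)).trans (le_add_of_nonneg_left hfar_nonneg)
  have hfar := abs_integral_sub_rpow_mul_le_of_primitive hα1 (a := 0) (b := t - T) (t := t)
    (by linarith) (by linarith) hf.continuousOn (fun x _ => hF x) (fun x _ => hCF x)
  rw [sub_sub_cancel] at hfar
  rw [← integral_add_adjacent_intervals (intervalIntegrable_sub_rpow_mul_s14 hα0 hf.continuousOn t)
    (intervalIntegrable_sub_rpow_mul_s14 hα0 hf.continuousOn t)]
  exact (abs_add_le _ _).trans (add_le_add hfar (hnear (t - T) t (by linarith) (by linarith)))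

end Kernel

/-- For a continuous `T`-periodic `f` and `α ∈ (0,1)`, the fractional integral `I^α f`
is bounded on `(0,∞)` if and only if the mean of `f` over a period is zero. -/
theorem rl_integral_bounded_iff_mean_zero (T : ℝ) (hT : 0 < T)
    (f : ℝ → ℝ) (hf : Continuous f) (hper : Function.Periodic f T)
    (α : ℝ) (hα : α ∈ Set.Ioo (0 : ℝ) 1) :
    (∃ M : ℝ, ∀ t ∈ Ioi (0 : ℝ),
        |(1 / Real.Gamma α) * ∫ s in (0 : ℝ)..t, (t - s) ^ (α - 1) * f s| ≤ M) ↔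
      (∫ t in (0 : ℝ)..T, f t) = 0 := by
  obtain ⟨hα0, hα1⟩ := hα
  rw [exists_abs_const_mul_le_iff (g := fun t => ∫ s in (0 : ℝ)..t, (t - s) ^ (α - 1) * f s)
    (one_div_pos.2 (Real.Gamma_pos_of_pos hα0)).ne']
  constructor
  · rintro ⟨M, hM⟩
    obtain ⟨c, hc⟩ : ∃ c, T * c = ∫ t in (0 : ℝ)..T, f t := ⟨_, mul_div_cancel₀ _ hT.ne'⟩
    have hmean : ∫ x in (0 : ℝ)..T, (f x - c) = 0 := by
      rw [integral_sub (hf.intervalIntegrable _ _) intervalIntegrable_const,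
        intervalIntegral.integral_const, smul_eq_mul, sub_zero, hc, sub_self]
    obtain ⟨M', hM'⟩ := exists_abs_integral_sub_rpow_mul_le_of_periodic (f := fun x => f x - c)
      hT (hf.sub continuous_const) (fun x => by simp only [hper x]) hmean hα0 hα1.le
    have hcα : c / α = 0 := eq_zero_of_forall_abs_mul_rpow_le hα0 (M := M + M') fun t ht => by
      calc |c / α * t ^ α|
          = |(∫ s in (0 : ℝ)..t, (t - s) ^ (α - 1) * f s) -
              ∫ s in (0 : ℝ)..t, (t - s) ^ (α - 1) * (f s - c)| := by
            rw [integral_sub_rpow_mul_sub_const hα0 hf.continuousOn c]; ring_nf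
        _ ≤ M + M' := (abs_sub _ _).trans (add_le_add (hM t ht) (hM' t ht.le))
    rw [← hc, (div_eq_zero_iff.1 hcα).resolve_right hα0.ne', mul_zero]
  · intro hmean
    obtain ⟨M, hM⟩ := exists_abs_integral_sub_rpow_mul_le_of_periodic hT hf hper hmean hα0 hα1.le
    exact ⟨M, fun t ht => hM t (le_of_lt ht)⟩
end

section
/- Let α > 0. The function t ↦ I^α sin(t) = (1/Γ(α)) ∫₀ᵗ (t−s)^{α−1} sin(s) ds is bounded on (0,∞) if and only if α ≤ 1. -/
/-!
Substituting `u = t - s`, the integral is `F t = ∫₀ᵗ u ^ (α - 1) sin (t - u) du`. Since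
`sin (t + π - u) = -sin (t - u)`, the sum `F t + F (t + π)` is the integral of
`u ^ (α - 1) sin (u - t)` over `[t, t + π]` alone, which is at least `2 t ^ (α - 1)` when
`α > 1`; so `F` is unbounded. When `α ≤ 1` the weight `u ^ (α - 1)` is decreasing: on `[0, 1]`
the integral is at most `∫₀¹ u ^ (α - 1) = 1 / α`, and on `[1, t]` integration by parts against
`cos (t - u)` bounds it by `2`.
-/

open MeasureTheory intervalIntegral Set Real

lemma integral_comp_sub_mul_eq_integral_mul_comp_sub (f g : ℝ → ℝ) (t : ℝ) :
    ∫ s in (0 : ℝ)..t, f (t - s) * g s = ∫ u in (0 : ℝ)..t, f u * g (t - u) := by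
  simpa [mul_comm] using integral_comp_sub_left (a := 0) (b := t) (fun u => f u * g (t - u)) t

lemma integral_mul_sin_sub_add_integral_mul_sin_add_pi_sub {g : ℝ → ℝ} {t : ℝ}
    (hg₀ : IntervalIntegrable g volume 0 t) (hg₁ : IntervalIntegrable g volume t (t + π)) :
    (∫ u in (0 : ℝ)..t, g u * sin (t - u)) + ∫ u in (0 : ℝ)..(t + π), g u * sin (t + π - u) =
      ∫ u in t..(t + π), g u * sin (u - t) := by
  have hflip : ∀ u, g u * sin (t + π - u) = -(g u * sin (t - u)) := fun u => by
    rw [add_sub_right_comm, sin_add_pi, mul_neg]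
  have hsplit := integral_add_adjacent_intervals
    (hg₀.mul_continuousOn (by fun_prop : ContinuousOn (fun u => sin (t - u)) _))
    (hg₁.mul_continuousOn (by fun_prop : ContinuousOn (fun u => sin (t - u)) _))
  have hsin : ∀ u, g u * sin (u - t) = -(g u * sin (t - u)) := fun u => by
    rw [← neg_sub, sin_neg, mul_neg]
  simp only [hflip, hsin, intervalIntegral.integral_neg, ← hsplit]
  ring

lemma two_mul_le_integral_mul_sin_sub {g : ℝ → ℝ} {t : ℝ}
    (hg : IntervalIntegrable g volume t (t + π)) (hmono : ∀ u ∈ Icc t (t + π), g t ≤ g u) :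
    2 * g t ≤ ∫ u in t..(t + π), g u * sin (u - t) := by
  have hsin : ∫ u in t..(t + π), g t * sin (u - t) = 2 * g t := by
    rw [intervalIntegral.integral_const_mul, intervalIntegral.integral_comp_sub_right,
      add_sub_cancel_left, sub_self, integral_sin, cos_zero, cos_pi]
    ring
  rw [← hsin]
  refine integral_mono_on (by linarith [pi_pos]) (Continuous.intervalIntegrable (by fun_prop) _ _)
    (hg.mul_continuousOn (by fun_prop)) fun u hu => ?_
  exact mul_le_mul_of_nonneg_right (hmono u hu)
    (sin_nonneg_of_nonneg_of_le_pi (by linarith [hu.1]) (by linarith [hu.2]))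

lemma exists_lt_abs_integral_rpow_mul_sin_sub {α : ℝ} (hα : 1 < α) (C : ℝ) :
    ∃ t > 0, C < |∫ u in (0 : ℝ)..t, u ^ (α - 1) * sin (t - u)| := by
  obtain ⟨t, hCt, ht⟩ := (((tendsto_rpow_atTop (sub_pos.2 hα)).eventually_gt_atTop C).and
    (Filter.eventually_gt_atTop 0)).exists
  have hint : ∀ a b : ℝ, IntervalIntegrable (fun u : ℝ => u ^ (α - 1)) volume a b :=
    fun _ _ => intervalIntegrable_rpow' (by linarith)
  have hsum := (two_mul_le_integral_mul_sin_sub (hint _ _) fun u hu =>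
    rpow_le_rpow ht.le hu.1 (by linarith)).trans_eq
      (integral_mul_sin_sub_add_integral_mul_sin_add_pi_sub (hint _ _) (hint _ _)).symm
  by_contra! hle
  have h₀ := (le_abs_self _).trans (hle t ht)
  have h₁ := (le_abs_self _).trans (hle (t + π) (by positivity))
  linarith

lemma abs_integral_rpow_mul_sin_sub_le_rpow_div {α : ℝ} (hα : 0 < α) {b : ℝ} (hb : 0 ≤ b)
    (c : ℝ) :
    |∫ u in (0 : ℝ)..b, u ^ (α - 1) * sin (c - u)| ≤ b ^ α / α := by
  have hint : IntervalIntegrable (fun u : ℝ => u ^ (α - 1)) volume 0 b :=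
    intervalIntegrable_rpow' (by linarith)
  calc |∫ u in (0 : ℝ)..b, u ^ (α - 1) * sin (c - u)|
      ≤ |∫ u in (0 : ℝ)..b, u ^ (α - 1)| := by
        refine norm_integral_le_abs_of_norm_le
          (f := fun u => u ^ (α - 1) * sin (c - u)) ?_ hint
        filter_upwards [ae_restrict_mem measurableSet_uIoc] with u hu
        rw [uIoc_of_le hb] at hu
        have hu₀ : 0 ≤ u ^ (α - 1) := rpow_nonneg hu.1.le _
        rw [norm_mul, norm_of_nonneg hu₀]
        exact mul_le_of_le_one_right hu₀ (abs_sin_le_one _)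
    _ = b ^ α / α := by
        rw [integral_rpow (Or.inl (by linarith)), sub_add_cancel, zero_rpow hα.ne', sub_zero,
          abs_of_nonneg (by positivity)]

/-- Integration by parts against `cos (c - u)`: the boundary terms contribute at most
`g a + g b`, and the remaining integral at most the total variation `g a - g b`. -/
lemma abs_integral_mul_sin_sub_le_of_hasDerivAt_nonpos {g g' : ℝ → ℝ} {a b : ℝ} (hab : a ≤ b)
    (hg : ∀ x ∈ Icc a b, HasDerivAt g (g' x) x) (hg' : IntervalIntegrable g' volume a b)
    (hg'_nonpos : ∀ x ∈ Icc a b, g' x ≤ 0) (hgb : 0 ≤ g b) (c : ℝ) :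
    |∫ u in a..b, g u * sin (c - u)| ≤ 2 * g a := by
  rw [← uIcc_of_le hab] at hg
  have hcos : ∀ x ∈ uIcc a b, HasDerivAt (fun u => cos (c - u)) (sin (c - x)) x := fun x _ => by
    simpa using ((hasDerivAt_id x).const_sub c).cos
  have hdrop : ∫ u in a..b, -g' u = g a - g b := by
    rw [intervalIntegral.integral_neg, integral_eq_sub_of_hasDerivAt hg hg', neg_sub]
  have hdrop_nonneg : 0 ≤ g a - g b :=
    hdrop ▸ integral_nonneg hab fun u hu => neg_nonneg.2 (hg'_nonpos u hu)
  have hvar : |∫ u in a..b, g' u * cos (c - u)| ≤ g a - g b := by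
    refine (norm_integral_le_abs_of_norm_le (f := fun u => g' u * cos (c - u))
      (g := fun u => -g' u) ?_ hg'.neg).trans_eq (by rw [hdrop, abs_of_nonneg hdrop_nonneg])
    filter_upwards [ae_restrict_mem measurableSet_uIoc] with u hu
    rw [uIoc_of_le hab] at hu
    have hu' := hg'_nonpos u (Ioc_subset_Icc_self hu)
    rw [norm_mul, norm_of_nonpos hu']
    exact mul_le_of_le_one_right (by linarith) (abs_cos_le_one _)
  rw [integral_mul_deriv_eq_deriv_mul hg hcos hg'
    (Continuous.intervalIntegrable (by fun_prop) _ _)]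
  have hb := abs_le.1 (abs_cos_le_one (c - b))
  have ha := abs_le.1 (abs_cos_le_one (c - a))
  have hv := abs_le.1 hvar
  rw [abs_le]
  constructor <;> nlinarith

lemma abs_integral_rpow_mul_sin_sub_le {α : ℝ} (hα₀ : 0 < α) (hα₁ : α ≤ 1) {t : ℝ} (ht : 0 ≤ t) :
    |∫ u in (0 : ℝ)..t, u ^ (α - 1) * sin (t - u)| ≤ 1 / α + 2 := by
  have hhead : ∀ b ∈ Icc (0 : ℝ) 1, |∫ u in (0 : ℝ)..b, u ^ (α - 1) * sin (t - u)| ≤ 1 / α :=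
    fun b hb => (abs_integral_rpow_mul_sin_sub_le_rpow_div hα₀ hb.1 t).trans
      (div_le_div_of_nonneg_right (rpow_le_one hb.1 hb.2 hα₀.le) hα₀.le)
  rcases le_total t 1 with ht₁ | ht₁
  · linarith [hhead t ⟨ht, ht₁⟩]
  have hpos : ∀ x ∈ Icc 1 t, 0 < x := fun x hx => by linarith [hx.1]
  have htail : |∫ u in (1 : ℝ)..t, u ^ (α - 1) * sin (t - u)| ≤ 2 := by
    simpa using abs_integral_mul_sin_sub_le_of_hasDerivAt_nonpos (g := fun u => u ^ (α - 1)) ht₁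
      (fun x hx => hasDerivAt_rpow_const (Or.inl (hpos x hx).ne'))
      (ContinuousOn.intervalIntegrable (by
        rw [uIcc_of_le ht₁]
        exact continuousOn_const.mul
          (continuousOn_id.rpow_const fun x hx => Or.inl (hpos x hx).ne')))
      (fun x hx => mul_nonpos_of_nonpos_of_nonneg (by linarith) (rpow_nonneg (hpos x hx).le _))
      (rpow_nonneg ht _) t
  have hint : ∀ a b : ℝ, IntervalIntegrable (fun u : ℝ => u ^ (α - 1) * sin (t - u)) volume a b :=
    fun a b => (intervalIntegrable_rpow' (by linarith)).mul_continuousOn (by fun_prop)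
  rw [← integral_add_adjacent_intervals (hint 0 1) (hint 1 t)]
  exact (abs_add_le _ _).trans (add_le_add (hhead 1 ⟨zero_le_one, le_rfl⟩) htail)

/-- For `α > 0`, the fractional integral `I^α sin` is bounded on `(0,∞)` if and only if
`α ≤ 1`. -/
theorem rl_integral_sin_bounded_iff (α : ℝ) (hα : 0 < α) :
    (∃ M : ℝ, ∀ t ∈ Ioi (0 : ℝ),
        |(1 / Real.Gamma α) * ∫ s in (0 : ℝ)..t, (t - s) ^ (α - 1) * Real.sin s| ≤ M) ↔
      α ≤ 1 := by
  have hΓ : 0 < 1 / Gamma α := one_div_pos.2 (Gamma_pos_of_pos hα)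
  simp_rw [integral_comp_sub_mul_eq_integral_mul_comp_sub (· ^ (α - 1)) sin, abs_mul,
    abs_of_pos hΓ]
  constructor
  · rintro ⟨M, hM⟩
    by_contra! hα₁
    obtain ⟨t, ht, hlt⟩ := exists_lt_abs_integral_rpow_mul_sin_sub hα₁ (M / (1 / Gamma α))
    exact ((div_lt_iff₀' hΓ).1 hlt).not_ge (hM t ht)
  · intro hα₁
    exact ⟨1 / Gamma α * (1 / α + 2), fun t ht =>
      mul_le_mul_of_nonneg_left (abs_integral_rpow_mul_sin_sub_le hα hα₁ ht.le) hΓ.le⟩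
end
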